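/- Potential-free types carry no potential: if |τ| = τ (τ is fixed by the zeroing operation) and ·; q ⊢ v : τ for a closed value v, then q = 0. -/
import Mathlib


set_option maxHeartbeats 1000000

namespace AARA

/-- Effect labels. -/
abbrev Label := ℕ
/-- Variable names. -/
abbrev Var := String

-- Resource-annotated types, annotated types, structural arrow types, and
-- effect signatures of the AARA-with-effects language.
mutual
  inductive Ty : Type where
    | unit : Ty
    | void : Ty
    | prod : Ty → Ty → Ty
    | sum : ATy → ATy → Ty
    | list : ATy → Ty
    /-- a (possibly infinite) set of structural arrow types `A → B ⊙ Δ`,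
    represented as a countably-indexed family -/
    | funSet : (ℕ → Option Arrow) → Ty
    /-- linear function type `A ⊸ B ⊙ Δ` -/
    | linArr : ATy → ATy → Sig → Ty

  /-- `⟨τ, q⟩`: a type with a nonnegative rational potential annotation. -/
  inductive ATy : Type where
    | mk : Ty → NNRat → ATy

  /-- A structural arrow type `A → B ⊙ Δ`. -/
  inductive Arrow : Type where
    | mk : ATy → ATy → Sig → Arrow

  /-- Effect signatures: finite lists of effect declarations `ℓ : A ⇒ B`. -/
  inductive Sig : Type where
    | nil : Sig
    | cons : Label → ATy → ATy → Sig → Sig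
end

/-- `ℓ : A ⇒ B ∈ Δ`. -/
inductive Sig.Mem : Label → ATy → ATy → Sig → Prop where
  | here : Sig.Mem l A B (.cons l A B Δ)
  | there : Sig.Mem l A B Δ → Sig.Mem l A B (.cons l' A' B' Δ)

/-- `ℓ ∈ dom Δ`. -/
def Sig.HasLabel (l : Label) (Δ : Sig) : Prop := ∃ A B, Sig.Mem l A B Δ

/-- Membership of an arrow type in a set `𝒯` of arrow types. -/
def Arrow.MemT (a : Arrow) (T : ℕ → Option Arrow) : Prop := ∃ n, T n = some a

-- The (partial) zeroing operation `|·|` on types; it is undefined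
-- (`none`) on linear function types.
mutual
  def Ty.zero? : Ty → Option Ty
    | .unit => some .unit
    | .void => some .void
    | .prod t1 t2 =>
      match t1.zero?, t2.zero? with
      | some a, some b => some (.prod a b)
      | _, _ => none
    | .sum A1 A2 =>
      match A1.zero?, A2.zero? with
      | some a, some b => some (.sum a b)
      | _, _ => none
    | .list A =>
      match A.zero? with
      | some a => some (.list a)
      | none => none
    | .funSet T => some (.funSet T)
    | .linArr _ _ _ => none

  def ATy.zero? : ATy → Option ATy
    | .mk τ _ =>
      match τ.zero? with
      | some τ' => some (.mk τ' 0)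
      | none => none
end

/-- `|τ| = τ`: τ is potential-free. -/
def Ty.IsZero (τ : Ty) : Prop := τ.zero? = some τ

/-- Typing contexts. -/
abbrev Ctx := List (Var × Ty)

/-- `|Γ| = Γ`: the context carries no potential. -/
def CtxZero (Γ : Ctx) : Prop := ∀ p ∈ Γ, p.2.IsZero

-- Values, computations, handler branch lists, and control stacks.
mutual
  inductive Val : Type where
    | var : Var → Val
    /-- `fix f x. e`: recursive structural function -/
    | fix : Var → Var → Comp → Val
    | triv : Val
    | pair : Val → Val → Val
    | inl : Val → Val
    | inr : Val → Val
    | nil : Val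
    | cons : Val → Val → Val
    /-- `λ̂x. e`: linear function -/
    | linlam : Var → Comp → Val
    /-- `dcont(k)`: reified control stack -/
    | dcont : Stack → Val

  inductive Comp : Type where
    | ret : Val → Comp
    | tick : ℚ → Comp
    /-- `let x = e1 in e2` -/
    | letin : Comp → Var → Comp → Comp
    | app : Val → Val → Comp
    /-- `case v {(x1, x2) ↪ e}` -/
    | casePair : Val → Var → Var → Comp → Comp
    /-- `case v {}` -/
    | caseVoid : Val → Comp
    /-- `case v {inl x1 ↪ e1 | inr x2 ↪ e2}` -/
    | caseSum : Val → Var → Comp → Var → Comp → Comp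
    /-- `case v {nil ↪ e1 | x :: y ↪ e2}` -/
    | caseList : Val → Comp → Var → Var → Comp → Comp
    /-- `do[ℓ] v` -/
    | doEff : Label → Val → Comp
    /-- `handle e {ℓ ↪ x. c. e_ℓ}_{ℓ ∈ dom Δ} {return y ↪ e_r}` -/
    | handle : Comp → Sig → Branches → Var → Comp → Comp
    /-- linear application `v1 ˆv2` -/
    | linapp : Val → Val → Comp

  /-- Effect handler branches `{ℓ ↪ x. c. e_ℓ}`. -/
  inductive Branches : Type where
    | nil : Branches
    | cons : Label → Var → Var → Comp → Branches → Branches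

  inductive Stack : Type where
    | emp : Stack
    /-- `k; x.e` -/
    | seq : Stack → Var → Comp → Stack
    /-- `k; handle _ {ℓ ↪ x. c. e_ℓ}_{ℓ ∈ dom Δ} {return y ↪ e_r}` -/
    | hand : Stack → Sig → Branches → Var → Comp → Stack
end

/-- First-match lookup of the branch for effect `ℓ`. -/
inductive Branches.Lookup : Branches → Label → Var → Var → Comp → Prop where
  | here : Branches.Lookup (.cons l x c e bs) l x c e
  | there : l ≠ l' → Branches.Lookup bs l x c e →
      Branches.Lookup (.cons l' x' c' e' bs) l x c e

/-- Stack append `k @ k'`. -/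
def Stack.append (k : Stack) : Stack → Stack
  | .emp => k
  | .seq k' x e => .seq (k.append k') x e
  | .hand k' Δ bs y er => .hand (k.append k') Δ bs y er

-- Capture-avoiding substitution `[v0/z]·` of a closed value `v0` for the
-- variable `z`.
mutual
  def substV (v0 : Val) (z : Var) : Val → Val
    | .var y => if y = z then v0 else .var y
    | .fix f x e => .fix f x (if f = z ∨ x = z then e else substC v0 z e)
    | .triv => .triv
    | .pair v1 v2 => .pair (substV v0 z v1) (substV v0 z v2)
    | .inl v => .inl (substV v0 z v)
    | .inr v => .inr (substV v0 z v)
    | .nil => .nil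
    | .cons v1 v2 => .cons (substV v0 z v1) (substV v0 z v2)
    | .linlam x e => .linlam x (if x = z then e else substC v0 z e)
    | .dcont k => .dcont (substK v0 z k)

  def substC (v0 : Val) (z : Var) : Comp → Comp
    | .ret v => .ret (substV v0 z v)
    | .tick q => .tick q
    | .letin e1 x e2 =>
        .letin (substC v0 z e1) x (if x = z then e2 else substC v0 z e2)
    | .app v1 v2 => .app (substV v0 z v1) (substV v0 z v2)
    | .casePair v x1 x2 e =>
        .casePair (substV v0 z v) x1 x2
          (if x1 = z ∨ x2 = z then e else substC v0 z e)
    | .caseVoid v => .caseVoid (substV v0 z v)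
    | .caseSum v x1 e1 x2 e2 =>
        .caseSum (substV v0 z v) x1 (if x1 = z then e1 else substC v0 z e1)
          x2 (if x2 = z then e2 else substC v0 z e2)
    | .caseList v e1 x y e2 =>
        .caseList (substV v0 z v) (substC v0 z e1) x y
          (if x = z ∨ y = z then e2 else substC v0 z e2)
    | .doEff l v => .doEff l (substV v0 z v)
    | .handle e Δ bs y er =>
        .handle (substC v0 z e) Δ (substB v0 z bs) y
          (if y = z then er else substC v0 z er)
    | .linapp v1 v2 => .linapp (substV v0 z v1) (substV v0 z v2)

  def substB (v0 : Val) (z : Var) : Branches → Branches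
    | .nil => .nil
    | .cons l x c e bs =>
        .cons l x c (if x = z ∨ c = z then e else substC v0 z e)
          (substB v0 z bs)

  def substK (v0 : Val) (z : Var) : Stack → Stack
    | .emp => .emp
    | .seq k x e => .seq (substK v0 z k) x (if x = z then e else substC v0 z e)
    | .hand k Δ bs y er =>
        .hand (substK v0 z k) Δ (substB v0 z bs) y
          (if y = z then er else substC v0 z er)
end

-- The value typing judgment `Γ; q ⊢ v : τ` (`VJ`), the computation typing
-- judgment `Γ; q ⊢ e : B ⊙ Δ` (`CJ`), the handler-branches typing judgment
-- (`BJ`), and the stack typing judgment `A₁ ⊙ Δ₁ ◁: k ◁: A₂ ⊙ Δ₂` (`KJ`).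
-- Contexts are treated as unordered (rule `exch`); context and potential
-- are treated affinely.
mutual
  inductive VJ : Ctx → NNRat → Val → Ty → Prop where
    /-- T-Var -/
    | var : VJ [(x, τ)] 0 (.var x) τ
    /-- T-Unit -/
    | unit : VJ [] 0 .triv .unit
    /-- T-Pair -/
    | pair : VJ Γ₁ q₁ v₁ τ₁ → VJ Γ₂ q₂ v₂ τ₂ →
        VJ (Γ₁ ++ Γ₂) (q₁ + q₂) (.pair v₁ v₂) (.prod τ₁ τ₂)
    /-- T-Inl -/
    | inl : VJ Γ p v τ₁ → VJ Γ (q₁ + p) (.inl v) (.sum ⟨τ₁, q₁⟩ A₂)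
    /-- T-Inr -/
    | inr : VJ Γ p v τ₂ → VJ Γ (q₂ + p) (.inr v) (.sum A₁ ⟨τ₂, q₂⟩)
    /-- T-Nil -/
    | nil : VJ [] 0 .nil (.list A)
    /-- T-Cons -/
    | cons : VJ Γ₁ q₁ v₁ τ → VJ Γ₂ q₂ v₂ (.list ⟨τ, p⟩) →
        VJ (Γ₁ ++ Γ₂) (q₁ + q₂ + p) (.cons v₁ v₂) (.list ⟨τ, p⟩)
    /-- T-Fun -/
    | fix : CtxZero Γ →
        (∀ τ q B Δ, Arrow.MemT (.mk ⟨τ, q⟩ B Δ) T →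
          CJ ((x, τ) :: (f, .funSet T) :: Γ) q e B Δ) →
        VJ Γ 0 (.fix f x e) (.funSet T)
    /-- T-LinFun -/
    | linlam : CJ ((x, τ) :: Γ) (p + q) e B Δ →
        VJ Γ p (.linlam x e) (.linArr ⟨τ, q⟩ B Δ)
    /-- T-Dcont -/
    | dcont : KJ A₁ Δ₁ k A₂ Δ₂ → VJ Γ 0 (.dcont k) (.linArr A₂ A₁ Δ₁)
    /-- contexts are unordered -/
    | exch : List.Perm Γ Γ' → VJ Γ q v τ → VJ Γ' q v τ

  inductive CJ : Ctx → NNRat → Comp → ATy → Sig → Prop where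
    /-- T-Val -/
    | val : VJ Γ q v τ → CJ Γ (q + p) (.ret v) ⟨τ, p⟩ Δ
    /-- T-Let -/
    | letin : CJ Γ₁ q e₁ ⟨τ, q'⟩ Δ → CJ ((x, τ) :: Γ₂) q' e₂ B Δ →
        CJ (Γ₁ ++ Γ₂) q (.letin e₁ x e₂) B Δ
    /-- T-Tick⁺ -/
    | tickPos : ∀ (q p : NNRat), CJ [] (q + p) (.tick (q : ℚ)) ⟨.unit, p⟩ Δ
    /-- T-Tick⁻ -/
    | tickNeg : ∀ (q p : NNRat), CJ [] p (.tick (-(q : ℚ))) ⟨.unit, p + q⟩ Δ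
    /-- T-App -/
    | app : VJ Γ₁ 0 v₁ (.funSet T) → Arrow.MemT (.mk ⟨τ, q₁⟩ B Δ) T →
        VJ Γ₂ q₂ v₂ τ → CJ (Γ₁ ++ Γ₂) (q₁ + q₂) (.app v₁ v₂) B Δ
    /-- T-Casepair -/
    | casePair : VJ Γ₁ q₁ v (.prod τ₁ τ₂) →
        CJ ((x₁, τ₁) :: (x₂, τ₂) :: Γ₂) q₂ e B Δ →
        CJ (Γ₁ ++ Γ₂) (q₁ + q₂) (.casePair v x₁ x₂ e) B Δ
    /-- T-Casevoid -/
    | caseVoid : VJ Γ q v .void → CJ Γ q (.caseVoid v) B Δ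
    /-- T-Casesum -/
    | caseSum : VJ Γ₁ q₁ v (.sum ⟨τ₁, p₁⟩ ⟨τ₂, p₂⟩) →
        CJ ((x₁, τ₁) :: Γ₂) (p₁ + q₂) e₁ B Δ →
        CJ ((x₂, τ₂) :: Γ₂) (p₂ + q₂) e₂ B Δ →
        CJ (Γ₁ ++ Γ₂) (q₁ + q₂) (.caseSum v x₁ e₁ x₂ e₂) B Δ
    /-- T-Caselist -/
    | caseList : VJ Γ₁ q₁ v (.list ⟨τ, p⟩) → CJ Γ₂ q₂ e₁ B Δ →
        CJ ((x, τ) :: (y, .list ⟨τ, p⟩) :: Γ₂) (q₂ + p) e₂ B Δ →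
        CJ (Γ₁ ++ Γ₂) (q₁ + q₂) (.caseList v e₁ x y e₂) B Δ
    /-- T-Linapp -/
    | linapp : VJ Γ₁ p v₁ (.linArr ⟨τ, q₁⟩ B Δ) → VJ Γ₂ q₂ v₂ τ →
        CJ (Γ₁ ++ Γ₂) (p + q₁ + q₂) (.linapp v₁ v₂) B Δ
    /-- T-Do -/
    | doEff : VJ Γ p v τ₁ → Sig.Mem l ⟨τ₁, q₁⟩ ⟨τ₂, q₂⟩ Δ →
        CJ Γ (p + q₁) (.doEff l v) ⟨τ₂, q₂⟩ Δ
    /-- T-Handle -/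
    | handle : CJ Γ₁ p e ⟨τ, q⟩ Δ → CtxZero Γ₂ →
        BJ Γ₂ bs Δ C Δ' →
        CJ ((y, τ) :: Γ₃) q er C Δ' →
        CJ (Γ₁ ++ Γ₂ ++ Γ₃) p (.handle e Δ bs y er) C Δ'
    /-- T-ContFun -/
    | contFun : CJ ((x₁, .funSet T) :: (x₂, .funSet T) :: Γ) q e B Δ →
        CJ ((x, .funSet T) :: Γ) q
          (substC (.var x) x₁ (substC (.var x) x₂ e)) B Δ
    /-- T-WeakVar / T-WeakFun -/
    | weakVar : CJ Γ q e B Δ → CJ ((x, τ) :: Γ) q e B Δ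
    /-- T-WeakPot -/
    | weakPot : CJ Γ q' e B Δ → q' ≤ q → CJ Γ q e B Δ
    /-- contexts are unordered -/
    | exch : List.Perm Γ Γ' → CJ Γ q e B Δ → CJ Γ' q e B Δ

  /-- `BJ Γ₂ bs Δ C Δ'`: every effect `ℓ : ⟨τ₁,q₁⟩ ⇒ B` declared in `Δ` has a
  branch `ℓ ↪ x. c. e_ℓ` in `bs` with
  `Γ₂, x : τ₁, c : B ⊸ C ⊙ Δ'; q₁ ⊢ e_ℓ : C ⊙ Δ'`. -/
  inductive BJ : Ctx → Branches → Sig → ATy → Sig → Prop where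
    | nil : BJ Γ₂ bs .nil C Δ'
    | cons : Branches.Lookup bs l x c el →
        CJ ((x, τ₁) :: (c, .linArr B C Δ') :: Γ₂) q₁ el C Δ' →
        BJ Γ₂ bs Δ C Δ' →
        BJ Γ₂ bs (.cons l ⟨τ₁, q₁⟩ B Δ) C Δ'

  inductive KJ : ATy → Sig → Stack → ATy → Sig → Prop where
    /-- K-Emp -/
    | emp : KJ B Δ .emp B Δ
    /-- K-Bnd -/
    | bnd : KJ A Δ₁ k B Δ₂ → CJ [(x, τ)] q e B Δ₂ →
        KJ A Δ₁ (.seq k x e) ⟨τ, q⟩ Δ₂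
    /-- K-Handler -/
    | handler : KJ A Δ₁ k B Δ₃ →
        BJ [] bs Δ₂ B Δ₃ →
        CJ [(y, τ)] q er B Δ₃ →
        KJ A Δ₁ (.hand k Δ₂ bs y er) ⟨τ, q⟩ Δ₂
end

/-- K-machine states. -/
inductive State : Type where
  /-- `k ▷ e` -/
  | eval : Stack → Comp → State
  /-- `k ◁ v` -/
  | retn : Stack → Val → State
  /-- `k ◀ (ℓ, v, k')` -/
  | eff : Stack → Label → Val → Stack → State

/-- State typing `q ⊢ s` (rules ST-Exp, ST-Val, ST-Eff). -/
inductive SJ : NNRat → State → Prop where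
  /-- ST-Exp -/
  | exp : CJ [] q e B Δ → KJ A₀ Δ₀ k B Δ → SJ q (.eval k e)
  /-- ST-Val -/
  | val : VJ [] q₁ v τ → KJ A₀ Δ₀ k ⟨τ, q₂⟩ Δ → SJ (q₁ + q₂) (.retn k v)
  /-- ST-Eff -/
  | eff : VJ [] q₁ v τ → Sig.Mem l ⟨τ, p⟩ C Δ' →
      KJ A₀ Δ₀ k B Δ' → KJ B Δ' k' C Δ'' →
      SJ (q₁ + p) (.eff k l v k')

/-- The cost transition judgment `s; q ↦ s'; q'` of the K-machine. -/
inductive Step : State → NNRat → State → NNRat → Prop where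
  /-- D-tick -/
  | tick : ∀ (r : ℚ) (p p' : NNRat), r ≤ (p : ℚ) → ((p' : ℚ) = (p : ℚ) - r) →
      Step (.eval k (.tick r)) p (.retn k .triv) p'
  /-- D-ret -/
  | ret : Step (.eval k (.ret v)) q (.retn k v) q
  /-- D-fun -/
  | fix : Step (.eval k (.app (.fix f x e) v)) q
      (.eval k (substC (.fix f x e) f (substC v x e))) q
  /-- D-let -/
  | letin : Step (.eval k (.letin e₁ x e₂)) q (.eval (.seq k x e₂) e₁) q
  /-- D-seq -/
  | seq : Step (.retn (.seq k x e) v) q (.eval k (substC v x e)) q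
  /-- D-pair -/
  | pairc : Step (.eval k (.casePair (.pair v₁ v₂) x₁ x₂ e)) q
      (.eval k (substC v₁ x₁ (substC v₂ x₂ e))) q
  /-- D-inl -/
  | inl : Step (.eval k (.caseSum (.inl v) x₁ e₁ x₂ e₂)) q
      (.eval k (substC v x₁ e₁)) q
  /-- D-inr -/
  | inr : Step (.eval k (.caseSum (.inr v) x₁ e₁ x₂ e₂)) q
      (.eval k (substC v x₂ e₂)) q
  /-- D-nil -/
  | nil : Step (.eval k (.caseList .nil e₀ x y e₁)) q (.eval k e₀) q
  /-- D-cons -/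
  | cons : Step (.eval k (.caseList (.cons v₁ v₂) e₀ x y e₁)) q
      (.eval k (substC v₁ x (substC v₂ y e₁))) q
  /-- D-try -/
  | try : Step (.eval k (.handle e Δ bs y er)) q
      (.eval (.hand k Δ bs y er) e) q
  /-- D-do -/
  | doEff : Step (.eval k (.doEff l v)) q (.eff k l v .emp) q
  /-- D-Capture -/
  | capture : Step (.eff (.seq k x e) l v k') q
      (.eff k l v ((Stack.seq .emp x e).append k')) q
  /-- D-handle -/
  | handle : Sig.HasLabel l' Δ → Branches.Lookup bs l' x c el →
      Step (.eff (.hand k Δ bs y er) l' v k') q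
        (.eval k (substC v x
          (substC (.dcont ((Stack.hand .emp Δ bs y er).append k')) c el))) q
  /-- D-normal -/
  | normal : Step (.retn (.hand k Δ bs y er) v) q (.eval k (substC v y er)) q
  /-- D-Dcont -/
  | dcont : Step (.eval k (.linapp (.dcont k') v)) q (.retn (k.append k') v) q
  /-- D-linfun -/
  | linfun : Step (.eval k (.linapp (.linlam x e) v)) q
      (.eval k (substC v x e)) q

/-- Finitely many machine steps. -/
inductive Steps : State → NNRat → State → NNRat → Prop where
  | refl : Steps s q s q
  | step : Step s q s' q' → Steps s' q' s'' q'' → Steps s q s'' q''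

/-- Final states: `ε ◁ v` or `ε ◀ (ℓ, v, k)`. -/
def Final : State → Prop
  | .retn .emp _ => True
  | .eff .emp _ _ _ => True
  | _ => False

/-- The sharing judgment `τ ⋎ (τ₁, τ₂)`: the three types are structurally
identical and differ only at their potential annotations, with every
annotation in `τ` the sum of the corresponding annotations in `τ₁`, `τ₂`. -/
inductive Share : Ty → Ty → Ty → Prop where
  | unit : Share .unit .unit .unit
  | void : Share .void .void .void
  | prod : Share a a₁ a₂ → Share b b₁ b₂ →
      Share (.prod a b) (.prod a₁ b₁) (.prod a₂ b₂)
  | sum : Share σ σ₁ σ₂ → Share ρ ρ₁ ρ₂ → p = p₁ + p₂ → q = q₁ + q₂ →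
      Share (.sum ⟨σ, p⟩ ⟨ρ, q⟩) (.sum ⟨σ₁, p₁⟩ ⟨ρ₁, q₁⟩) (.sum ⟨σ₂, p₂⟩ ⟨ρ₂, q₂⟩)
  | list : Share σ σ₁ σ₂ → p = p₁ + p₂ →
      Share (.list ⟨σ, p⟩) (.list ⟨σ₁, p₁⟩) (.list ⟨σ₂, p₂⟩)
  | funSet : Share (.funSet T) (.funSet T) (.funSet T)
  | linArr : Share (.linArr A B Δ) (.linArr A B Δ) (.linArr A B Δ)

lemma prod_isZero {τ₁ τ₂ : Ty} (h : (Ty.prod τ₁ τ₂).IsZero) :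
    τ₁.IsZero ∧ τ₂.IsZero := by
  unfold Ty.IsZero Ty.zero? at h
  rcases h1 : τ₁.zero? with _ | a <;> rcases h2 : τ₂.zero? with _ | b <;>
    simp [h1, h2] at h
  obtain ⟨e1, e2⟩ := h
  subst e1; subst e2; exact ⟨h1, h2⟩

lemma sum_isZero {τ₁ τ₂ : Ty} {q₁ q₂ : NNRat}
    (h : (Ty.sum ⟨τ₁, q₁⟩ ⟨τ₂, q₂⟩).IsZero) :
    τ₁.IsZero ∧ q₁ = 0 ∧ τ₂.IsZero ∧ q₂ = 0 := by
  unfold Ty.IsZero Ty.zero? ATy.zero? at h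
  rcases h1 : τ₁.zero? with _ | a <;> rcases h2 : τ₂.zero? with _ | b <;>
    simp [h1, h2] at h
  obtain ⟨⟨e1, e1'⟩, e2, e2'⟩ := h
  subst e1; subst e2
  exact ⟨h1, e1'.symm, h2, e2'.symm⟩

lemma list_isZero {τ : Ty} {p : NNRat}
    (h : (Ty.list ⟨τ, p⟩).IsZero) : τ.IsZero ∧ p = 0 := by
  unfold Ty.IsZero Ty.zero? ATy.zero? at h
  rcases h1 : τ.zero? with _ | a <;> simp [h1] at h
  obtain ⟨e1, e2⟩ := h
  subst e1
  exact ⟨h1, e2.symm⟩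

lemma linArr_not_isZero {A B : ATy} {Δ : Sig} :
    ¬ (Ty.linArr A B Δ).IsZero := by
  unfold Ty.IsZero Ty.zero?
  simp

lemma isZero_no_potential_gen {Γ : Ctx} {τ : Ty} {v : Val} {q : NNRat}
    (h : VJ Γ q v τ) : Γ = [] → τ.IsZero → q = 0 := by
  refine VJ.rec (motive_1 := fun Γ q v τ _ => Γ = [] → τ.IsZero → q = 0)
    (motive_2 := fun _ _ _ _ _ _ => True)
    (motive_3 := fun _ _ _ _ _ _ => True)
    (motive_4 := fun _ _ _ _ _ _ => True)
    ?_ ?_ ?_ ?_ ?_ ?_ ?_ ?_ ?_ ?_ ?_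
    ?_ ?_ ?_ ?_ ?_ ?_ ?_ ?_ ?_ ?_ ?_ ?_ ?_ ?_ ?_ ?_
    ?_ ?_
    ?_ ?_ ?_
    h
  all_goals try (intros; exact trivial)
  -- var
  · intro x τ hΓ _
    simp at hΓ
  -- unit
  · exact fun _ _ => rfl
  -- pair
  · intro Γ₁ q₁ v₁ τ₁ Γ₂ q₂ v₂ τ₂ _ _ ih1 ih2 hΓ hτ
    obtain ⟨e1, e2⟩ := List.append_eq_nil_iff.mp hΓ
    obtain ⟨z1, z2⟩ := prod_isZero hτ
    rw [ih1 e1 z1, ih2 e2 z2, add_zero]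
  -- inl
  · intro Γ p v τ₁ q₁ A₂ _ ih hΓ hτ
    obtain ⟨A₂τ, A₂q⟩ := A₂
    obtain ⟨z1, e1, _, _⟩ := sum_isZero hτ
    rw [e1, ih hΓ z1, add_zero]
  -- inr
  · intro Γ p v τ₂ q₂ A₁ _ ih hΓ hτ
    obtain ⟨A₁τ, A₁q⟩ := A₁
    obtain ⟨_, _, z2, e2⟩ := sum_isZero hτ
    rw [e2, ih hΓ z2, add_zero]
  -- nil
  · exact fun _ _ => rfl
  -- cons
  · intro Γ₁ q₁ v₁ τ Γ₂ q₂ v₂ p _ _ ih1 ih2 hΓ hτ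
    obtain ⟨e1, e2⟩ := List.append_eq_nil_iff.mp hΓ
    obtain ⟨z, hp⟩ := list_isZero hτ
    rw [ih1 e1 z, ih2 e2 hτ, hp, add_zero, add_zero]
  -- fix
  · exact fun _ _ _ _ _ => rfl
  -- linlam
  · intro x τ Γ p q' e B Δ _ _ _ hτ
    exact absurd hτ linArr_not_isZero
  -- dcont
  · exact fun _ _ _ _ => rfl
  -- exch
  · intro Γ Γ' q' v' τ' hperm _ ih hΓ hτ
    subst hΓ
    exact ih (List.Perm.nil_eq hperm.symm).symm hτ

/-- Potential-free types carry no potential: if `|τ| = τ` and `·; q ⊢ v : τ`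
for a closed value `v`, then `q = 0`. -/
theorem isZero_no_potential {τ : Ty} {v : Val} {q : NNRat}
    (hτ : τ.IsZero) (h : VJ [] q v τ) : q = 0 :=
  isZero_no_potential_gen h rfl hτ

end AARA
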